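/- For 0 ≤ a ≤ 1/2 and b ≥ √(1−a²), let h_{a,b} = dx² + 2a dx dy + (a²+b²) dy² be a flat metric on the torus ℝ²/ℤ². Define φ: ℝ²/ℤ² → ℂ³ by φ(x,y) = (1/√(8π²))(p e^{2πix}, q e^{2πiy}, r e^{2πi(x+y)}) with p = √(2(1−a)), q = √(2(a²+b²−a)), r = √(2a). Then φ*h_{ℂ³} = h_{a,b}, i.e., φ is an isometric immersion with respect to h_{a,b}. -/

import Mathlib

/- STATEMENT 9: for `0 ≤ a ≤ 1/2`, `b ≥ √(1-a²)`, the map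
`φ(x,y) = (1/√(8π²))(p e^{2πix}, q e^{2πiy}, r e^{2πi(x+y)})` with
`p = √(2(1-a))`, `q = √(2(a²+b²-a))`, `r = √(2a)` satisfies `φ*h_{ℂ³} = h_{a,b}`,
i.e. `φ` is an isometric immersion of the torus `ℝ²/ℤ²` for the flat metric
`h_{a,b} = dx² + 2a dx dy + (a²+b²) dy²`.  (The pullback condition is expressed as
`‖dφ_x(v)‖² = h_{a,b}(v,v)` for all tangent vectors `v`.) -/

open Real

noncomputable def flatTorusMap (p q r : ℝ) :
    EuclideanSpace ℝ (Fin 2) → EuclideanSpace ℂ (Fin 3) := fun x =>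
  (WithLp.equiv 2 (Fin 3 → ℂ)).symm
    ![ (p / Real.sqrt (8 * π ^ 2) : ℂ) * Complex.exp (↑(2 * π * x 0) * Complex.I),
       (q / Real.sqrt (8 * π ^ 2) : ℂ) * Complex.exp (↑(2 * π * x 1) * Complex.I),
       (r / Real.sqrt (8 * π ^ 2) : ℂ) * Complex.exp (↑(2 * π * (x 0 + x 1)) * Complex.I) ]

lemma aux_hasFDerivAt (c : ℝ) (ℓ : EuclideanSpace ℝ (Fin 2) →L[ℝ] ℝ)
    (x : EuclideanSpace ℝ (Fin 2)) :
    HasFDerivAt (fun x : EuclideanSpace ℝ (Fin 2) =>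
        (c : ℂ) * Complex.exp (↑(2 * π * ℓ x) * Complex.I))
      (((c : ℂ) * Complex.exp (↑(2 * π * ℓ x) * Complex.I) * (2 * π) * Complex.I) •
        (Complex.ofRealCLM.comp ℓ)) x := by
  set L := ((((2 * π : ℝ) : ℂ) * Complex.I) • (Complex.ofRealCLM.comp ℓ)) with hLdef
  have hL : HasFDerivAt (fun x : EuclideanSpace ℝ (Fin 2) => (↑(2 * π * ℓ x) * Complex.I)) L x := by
    refine (L.hasFDerivAt (x := x)).congr_of_eventuallyEq
      (Filter.Eventually.of_forall fun y => ?_)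
    simp [hLdef]
    ring
  have h2 := (hL.cexp.const_mul (c : ℂ))
  refine h2.congr_fderiv ?_
  ext v
  simp [hLdef, smul_smul]
  left; ring

lemma flatTorusMap_hasFDerivAt (p q r : ℝ) (x : EuclideanSpace ℝ (Fin 2)) :
    HasFDerivAt (flatTorusMap p q r)
      (((PiLp.continuousLinearEquiv 2 ℝ (fun _ : Fin 3 => ℂ)).symm :
          (Fin 3 → ℂ) →L[ℝ] EuclideanSpace ℂ (Fin 3)).comp
        (ContinuousLinearMap.pi
          ![ ((p / Real.sqrt (8 * π ^ 2) : ℂ) * Complex.exp (↑(2 * π * x 0) * Complex.I)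
                * (2 * π) * Complex.I) •
              (Complex.ofRealCLM.comp (EuclideanSpace.proj 0)),
             ((q / Real.sqrt (8 * π ^ 2) : ℂ) * Complex.exp (↑(2 * π * x 1) * Complex.I)
                * (2 * π) * Complex.I) •
              (Complex.ofRealCLM.comp (EuclideanSpace.proj 1)),
             ((r / Real.sqrt (8 * π ^ 2) : ℂ) * Complex.exp (↑(2 * π * (x 0 + x 1)) * Complex.I)
                * (2 * π) * Complex.I) •
              (Complex.ofRealCLM.comp (EuclideanSpace.proj 0 + EuclideanSpace.proj 1)) ])) x := by
  have hg : HasFDerivAt (fun x : EuclideanSpace ℝ (Fin 2) =>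
      ![ (p / Real.sqrt (8 * π ^ 2) : ℂ) * Complex.exp (↑(2 * π * x 0) * Complex.I),
         (q / Real.sqrt (8 * π ^ 2) : ℂ) * Complex.exp (↑(2 * π * x 1) * Complex.I),
         (r / Real.sqrt (8 * π ^ 2) : ℂ) * Complex.exp (↑(2 * π * (x 0 + x 1)) * Complex.I) ])
      (ContinuousLinearMap.pi
          ![ ((p / Real.sqrt (8 * π ^ 2) : ℂ) * Complex.exp (↑(2 * π * x 0) * Complex.I)
                * (2 * π) * Complex.I) •
              (Complex.ofRealCLM.comp (EuclideanSpace.proj 0)),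
             ((q / Real.sqrt (8 * π ^ 2) : ℂ) * Complex.exp (↑(2 * π * x 1) * Complex.I)
                * (2 * π) * Complex.I) •
              (Complex.ofRealCLM.comp (EuclideanSpace.proj 1)),
             ((r / Real.sqrt (8 * π ^ 2) : ℂ) * Complex.exp (↑(2 * π * (x 0 + x 1)) * Complex.I)
                * (2 * π) * Complex.I) •
              (Complex.ofRealCLM.comp (EuclideanSpace.proj 0 + EuclideanSpace.proj 1)) ]) x := by
    rw [hasFDerivAt_pi']
    intro i
    fin_cases i <;>
      simp only [ContinuousLinearMap.proj_pi, Matrix.cons_val_zero, Matrix.cons_val_one,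
        Matrix.head_cons, Matrix.cons_val_two, Matrix.tail_cons, Fin.isValue]
    · have := aux_hasFDerivAt (p / Real.sqrt (8 * π ^ 2)) (EuclideanSpace.proj 0) x
      simpa using this
    · have := aux_hasFDerivAt (q / Real.sqrt (8 * π ^ 2)) (EuclideanSpace.proj 1) x
      simpa using this
    · have := aux_hasFDerivAt (r / Real.sqrt (8 * π ^ 2))
        (EuclideanSpace.proj 0 + EuclideanSpace.proj 1) x
      simpa using this
  exact ((PiLp.continuousLinearEquiv 2 ℝ (fun _ : Fin 3 => ℂ)).symm.toContinuousLinearMap.hasFDerivAt).comp x hg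

lemma stmt9_norm_calc (a b : ℝ) (ha0 : 0 ≤ a) (ha : a ≤ 1 / 2) (hb : Real.sqrt (1 - a ^ 2) ≤ b)
    (p q r : ℝ) (hp : p = Real.sqrt (2 * (1 - a))) (hq : q = Real.sqrt (2 * (a ^ 2 + b ^ 2 - a)))
    (hr : r = Real.sqrt (2 * a)) (x v : EuclideanSpace ℝ (Fin 2))
    (w : EuclideanSpace ℂ (Fin 3))
    (hw0 : w 0 = (p / Real.sqrt (8 * π ^ 2) : ℂ) * Complex.exp (↑(2 * π * x 0) * Complex.I)
            * (2 * π) * Complex.I * (v 0 : ℝ))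
    (hw1 : w 1 = (q / Real.sqrt (8 * π ^ 2) : ℂ) * Complex.exp (↑(2 * π * x 1) * Complex.I)
            * (2 * π) * Complex.I * (v 1 : ℝ))
    (hw2 : w 2 = (r / Real.sqrt (8 * π ^ 2) : ℂ) * Complex.exp (↑(2 * π * (x 0 + x 1)) * Complex.I)
            * (2 * π) * Complex.I * ((v 0 + v 1 : ℝ))) :
    ‖w‖ ^ 2 = (v 0) ^ 2 + 2 * a * (v 0) * (v 1) + (a ^ 2 + b ^ 2) * (v 1) ^ 2 := by
  have hpi : (0:ℝ) < π := Real.pi_pos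
  have h1a : (0:ℝ) ≤ 1 - a := by linarith
  have hb0 : (0:ℝ) ≤ b := le_trans (Real.sqrt_nonneg _) hb
  have hb2 : 1 - a ^ 2 ≤ b ^ 2 := by
    have := Real.sq_sqrt (by nlinarith : (0:ℝ) ≤ 1 - a ^ 2)
    nlinarith [Real.sqrt_nonneg (1 - a ^ 2)]
  have hqnn : (0:ℝ) ≤ a ^ 2 + b ^ 2 - a := by nlinarith
  have hp2 : p ^ 2 = 2 * (1 - a) := by rw [hp]; exact Real.sq_sqrt (by linarith)
  have hq2 : q ^ 2 = 2 * (a ^ 2 + b ^ 2 - a) := by rw [hq]; exact Real.sq_sqrt (by linarith)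
  have hr2 : r ^ 2 = 2 * a := by rw [hr]; exact Real.sq_sqrt (by linarith)
  have hK2 : (Real.sqrt (8 * π ^ 2)) ^ 2 = 8 * π ^ 2 := Real.sq_sqrt (by positivity)
  have hK0 : (0:ℝ) < Real.sqrt (8 * π ^ 2) := Real.sqrt_pos.2 (by positivity)
  rw [EuclideanSpace.norm_eq, Real.sq_sqrt (Finset.sum_nonneg fun i _ => sq_nonneg _)]
  rw [Fin.sum_univ_three, hw0, hw1, hw2]
  simp only [norm_mul, Complex.norm_exp_ofReal_mul_I, Complex.norm_I,
    Complex.norm_real, norm_div, Real.norm_eq_abs, Complex.norm_two, Complex.norm_ofNat]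
  simp only [mul_pow, div_pow, sq_abs, one_pow, mul_one, hK2, hp2, hq2, hr2]
  have hπ0 : π ≠ 0 := ne_of_gt hpi
  field_simp
  ring

theorem stmt_9 (a b : ℝ) (ha0 : 0 ≤ a) (ha : a ≤ 1 / 2) (hb : Real.sqrt (1 - a ^ 2) ≤ b)
    (p q r : ℝ) (hp : p = Real.sqrt (2 * (1 - a))) (hq : q = Real.sqrt (2 * (a ^ 2 + b ^ 2 - a)))
    (hr : r = Real.sqrt (2 * a)) :
    ∀ (x v : EuclideanSpace ℝ (Fin 2)),
      ‖fderiv ℝ (flatTorusMap p q r) x v‖ ^ 2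
        = (v 0) ^ 2 + 2 * a * (v 0) * (v 1) + (a ^ 2 + b ^ 2) * (v 1) ^ 2 := by
  intro x v
  have h := flatTorusMap_hasFDerivAt p q r x
  rw [h.fderiv]
  refine stmt9_norm_calc a b ha0 ha hb p q r hp hq hr x v _ ?_ ?_ ?_ <;>
    · simp only [ContinuousLinearMap.coe_comp', Function.comp_apply,
        ContinuousLinearEquiv.coe_coe, PiLp.continuousLinearEquiv_symm_apply, PiLp.toLp_apply,
        ContinuousLinearMap.pi_apply, ContinuousLinearMap.smul_apply,
        ContinuousLinearMap.comp_apply, Complex.ofRealCLM_apply, PiLp.proj_apply,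
        ContinuousLinearMap.add_apply, Matrix.cons_val_zero,
        Matrix.cons_val_one, Matrix.head_cons, Matrix.cons_val_two, Matrix.tail_cons,
        smul_eq_mul, Fin.isValue]
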